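/- arXiv:2408.04595 — 5 statements merged into one kernel-verified Lean document; each statement's English description precedes it below -/
import Mathlib

section
/- Fix B > 0 and suppose the fraction of B-near-optimal arms satisfies |S_B|/K ≥ α > 0, where S_B = {a : √(n* Δ_a²/(2 log T)) ≤ B} and n* is the root of the characteristic equation. Then for every ε ∈ (0,1), f(n*(1+ε)) ≥ 1 + αε/((1+2B)²(1+B)²), where f(y) = ∑_{a=1}^K (√(T/y) + √(T Δ_a²/(2 log T)))^{-2}. -/
/-!
Put `s = √(T/n*)`, `t = √(1+ε) ∈ [1, 2)` and `q_a = √(n* Δ_a²/(2 log T))`. Both terms of a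
summand of `f` scale with `s`: the summand is `s⁻²(1 + q_a)⁻²` at `n*` and `s⁻²(t⁻¹ + q_a)⁻²` at
`n*(1+ε)`. So no summand decreases, and for an arm of `S_B` the increase is
`s⁻²(t-1)(t+1+2tq_a)/((1+tq_a)²(1+q_a)²) ≥ s⁻²(t²-1)/((1+2B)²(1+B)²)`, as `t ≤ 2` and `q_a ≤ B`.
Since `t² - 1 = ε` and `s² = T/n* ≤ K`, summing over the at least `αK` arms of `S_B` gives the
bound.
-/

open Real Finset

theorem Finset.sum_add_card_nsmul_le_sum {ι M : Type*} [AddCommGroup M] [PartialOrder M]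
    [IsOrderedAddMonoid M] {s t : Finset ι} {g h : ι → M} {δ : M} (hst : s ⊆ t)
    (hle : ∀ i ∈ t, g i ≤ h i) (hgain : ∀ i ∈ s, g i + δ ≤ h i) :
    ∑ i ∈ t, g i + #s • δ ≤ ∑ i ∈ t, h i := by
  have hs : #s • δ ≤ ∑ i ∈ s, (h i - g i) :=
    card_nsmul_le_sum s _ δ fun i hi => le_sub_iff_add_le'.mpr (hgain i hi)
  have ht : ∑ i ∈ s, (h i - g i) ≤ ∑ i ∈ t, (h i - g i) :=
    sum_le_sum_of_subset_of_nonneg hst fun i hi _ => sub_nonneg.mpr (hle i hi)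
  have := hs.trans ht
  rw [sum_sub_distrib] at this
  exact le_sub_iff_add_le'.mp this

theorem inv_add_sq_le_inv_add_sq {x y c : ℝ} (hy : 0 < y) (hyx : y ≤ x) (hc : 0 ≤ c) :
    (x + c)⁻¹ ^ 2 ≤ (y + c)⁻¹ ^ 2 :=
  pow_le_pow_left₀ (inv_nonneg.mpr (by linarith)) (inv_anti₀ (by positivity) (by linarith)) 2

theorem inv_one_add_sq_add_le_inv_inv_add_sq {t b B : ℝ} (ht1 : 1 ≤ t) (ht2 : t ≤ 2)
    (hb : 0 ≤ b) (hbB : b ≤ B) :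
    (1 + b)⁻¹ ^ 2 + (t ^ 2 - 1) / ((1 + 2 * B) ^ 2 * (1 + B) ^ 2) ≤ (t⁻¹ + b)⁻¹ ^ 2 := by
  have hdiff : (t⁻¹ + b)⁻¹ ^ 2 - (1 + b)⁻¹ ^ 2
      = (t - 1) * (t + 1 + 2 * t * b) / ((1 + t * b) ^ 2 * (1 + b) ^ 2) := by
    field_simp
    ring
  have hden : (1 + t * b) ^ 2 * (1 + b) ^ 2 ≤ (1 + 2 * B) ^ 2 * (1 + B) ^ 2 := by
    gcongr
  have hnum : (t - 1) * (t + 1) ≤ (t - 1) * (t + 1 + 2 * t * b) :=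
    mul_le_mul_of_nonneg_left (by nlinarith) (by linarith)
  rw [← le_sub_iff_add_le', hdiff, show t ^ 2 - 1 = (t - 1) * (t + 1) by ring]
  exact div_le_div₀ (by nlinarith) hnum (by positivity) hden

theorem inv_add_sq_add_le_inv_div_add_sq {s c t B : ℝ} (hs : 0 < s) (ht1 : 1 ≤ t) (ht2 : t ≤ 2)
    (hc : 0 ≤ c) (hcB : c ≤ B * s) :
    (s + c)⁻¹ ^ 2 + (t ^ 2 - 1) / (s ^ 2 * ((1 + 2 * B) ^ 2 * (1 + B) ^ 2)) ≤
      (s / t + c)⁻¹ ^ 2 := by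
  have h := inv_one_add_sq_add_le_inv_inv_add_sq ht1 ht2 (div_nonneg hc hs.le)
    ((div_le_iff₀ hs).mpr hcB)
  have hscale : ∀ x : ℝ, (s * (x + c / s))⁻¹ ^ 2 = (s ^ 2)⁻¹ * (x + c / s)⁻¹ ^ 2 := by
    intro x; rw [mul_inv, mul_pow, inv_pow]
  rw [show s + c = s * (1 + c / s) by field_simp, show s / t + c = s * (t⁻¹ + c / s) by field_simp,
    hscale, hscale, div_mul_eq_div_div_swap, div_eq_inv_mul _ (s ^ 2), ← mul_add]
  exact mul_le_mul_of_nonneg_left h (by positivity)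

theorem sum_inv_add_sq_add_card_mul_le {ι : Type*} {I S : Finset ι} {c : ι → ℝ} {s t B : ℝ}
    (hs : 0 < s) (ht1 : 1 ≤ t) (ht2 : t ≤ 2) (hSI : S ⊆ I) (hc : ∀ i ∈ I, 0 ≤ c i)
    (hcB : ∀ i ∈ S, c i ≤ B * s) :
    ∑ i ∈ I, (s + c i)⁻¹ ^ 2 + #S * ((t ^ 2 - 1) / (s ^ 2 * ((1 + 2 * B) ^ 2 * (1 + B) ^ 2))) ≤
      ∑ i ∈ I, (s / t + c i)⁻¹ ^ 2 := by
  rw [← nsmul_eq_mul]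
  refine sum_add_card_nsmul_le_sum hSI (fun i hi => ?_) fun i hi => ?_
  · exact inv_add_sq_le_inv_add_sq (div_pos hs (by linarith)) (div_le_self hs.le ht1) (hc i hi)
  · exact inv_add_sq_add_le_inv_div_add_sq hs ht1 ht2 (hc i (hSI hi)) (hcB i hi)

theorem ucb_characteristic_lower_perturbation_general
    (T K : ℕ) (hK : 2 ≤ K) (hTK : K ≤ T)
    (Δ : ℕ → ℝ)
    (f : ℝ → ℝ)
    (hf : ∀ y, f y = ∑ a ∈ Finset.range K,
      (Real.sqrt ((T : ℝ) / y) + Real.sqrt ((T : ℝ) * (Δ a) ^ 2 / (2 * Real.log T)))⁻¹ ^ 2)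
    (nstar : ℝ) (hn_lb : (T : ℝ) / K ≤ nstar)
    (hnroot : f nstar = 1)
    (B : ℝ) (hB : 0 < B)
    (α : ℝ)
    (hSB : (α * K : ℝ) ≤
      ((Finset.range K).filter
        (fun a => Real.sqrt (nstar * (Δ a) ^ 2 / (2 * Real.log T)) ≤ B)).card)
    (ε : ℝ) (hε : 0 < ε) (hε1 : ε < 1) :
    f (nstar * (1 + ε)) ≥ 1 + α * ε / ((1 + 2 * B) ^ 2 * (1 + B) ^ 2) := by
  have hK0 : (0 : ℝ) < K := by exact_mod_cast (by omega : 0 < K)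
  have hT0 : (0 : ℝ) < T := by exact_mod_cast (by omega : 0 < T)
  have hn0 : 0 < nstar := (div_pos hT0 hK0).trans_le hn_lb
  set D := (1 + 2 * B) ^ 2 * (1 + B) ^ 2
  set S := (range K).filter fun a => √(nstar * Δ a ^ 2 / (2 * Real.log T)) ≤ B
  set s := √((T : ℝ) / nstar)
  set t := √(1 + ε)
  have hs : 0 < s := Real.sqrt_pos.mpr (div_pos hT0 hn0)
  have ht1 : 1 ≤ t := Real.one_le_sqrt.mpr (by linarith)
  have ht2 : t ≤ 2 := Real.sqrt_le_iff.mpr ⟨by norm_num, by linarith⟩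
  have hs2 : s ^ 2 ≤ K := by
    rw [Real.sq_sqrt (div_pos hT0 hn0).le, div_le_iff₀ hn0]
    rwa [div_le_iff₀ hK0, mul_comm] at hn_lb
  have ht_sq : t ^ 2 - 1 = ε := by rw [Real.sq_sqrt (by linarith)]; ring
  have hshift : √((T : ℝ) / (nstar * (1 + ε))) = s / t := by
    rw [← div_div, Real.sqrt_div' _ (by linarith)]
  have hc : ∀ a, √((T : ℝ) * Δ a ^ 2 / (2 * Real.log T)) =
      √(nstar * Δ a ^ 2 / (2 * Real.log T)) * s := by
    intro a
    rw [← Real.sqrt_mul' _ (div_pos hT0 hn0).le]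
    congr 1
    field_simp
  have hgain := sum_inv_add_sq_add_card_mul_le (S := S) (B := B)
    (c := fun a => √((T : ℝ) * Δ a ^ 2 / (2 * Real.log T))) hs ht1 ht2 (filter_subset _ _)
    (fun a _ => Real.sqrt_nonneg _)
    fun a ha => by rw [hc]; exact mul_le_mul_of_nonneg_right (mem_filter.mp ha).2 hs.le
  rw [ht_sq] at hgain
  have hroot : ∑ a ∈ range K, (s + √((T : ℝ) * Δ a ^ 2 / (2 * Real.log T)))⁻¹ ^ 2 = 1 := by
    rw [← hnroot, hf]
  calc 1 + α * ε / D = 1 + α * K * (ε / (K * D)) := by field_simp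
    _ ≤ 1 + #S * (ε / (K * D)) := by gcongr
    _ ≤ 1 + #S * (ε / (s ^ 2 * D)) := by gcongr
    _ ≤ f (nstar * (1 + ε)) := by rw [hf, hshift]; linarith

/-- If at least an `α`-fraction of the arms are `B`-near-optimal, then
`f(n*(1+ε)) ≥ 1 + αε/((1+2B)²(1+B)²)` for every `ε ∈ (0,1)`. -/
theorem ucb_characteristic_lower_perturbation
    (T K : ℕ) (hK : 2 ≤ K) (hTK : K ≤ T)
    (Δ : ℕ → ℝ) (hΔ : ∀ a, 0 ≤ Δ a) (hΔ1 : Δ 0 = 0)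
    (f : ℝ → ℝ)
    (hf : ∀ y, f y = ∑ a ∈ Finset.range K,
      (Real.sqrt ((T : ℝ) / y) + Real.sqrt ((T : ℝ) * (Δ a) ^ 2 / (2 * Real.log T)))⁻¹ ^ 2)
    (nstar : ℝ) (hn_lb : (T : ℝ) / K ≤ nstar) (hn_ub : nstar ≤ T)
    (hnroot : f nstar = 1)
    (B : ℝ) (hB : 0 < B)
    (α : ℝ) (hα : 0 < α) (hα1 : α ≤ 1)
    (hSB : (α * K : ℝ) ≤
      ((Finset.range K).filter
        (fun a => Real.sqrt (nstar * (Δ a) ^ 2 / (2 * Real.log T)) ≤ B)).card)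
    (ε : ℝ) (hε : 0 < ε) (hε1 : ε < 1) :
    f (nstar * (1 + ε)) ≥ 1 + α * ε / ((1 + 2 * B) ^ 2 * (1 + B) ^ 2) :=
  ucb_characteristic_lower_perturbation_general T K hK hTK Δ f hf nstar hn_lb hnroot B hB α hSB ε hε
    hε1
end

section
/- Fix B > 0 and suppose |S_B|/K ≥ α > 0 where S_B = {a : √(n* Δ_a²/(2 log T)) ≤ B}. Then for every ε ∈ (0,1), f(n*(1−ε)) ≤ 1 − αε/((1+2B)²(1+B)²), where f is the characteristic function ∑_{a=1}^K (√(T/y) + √(T Δ_a²/(2 log T)))^{-2} and n* its unique root. -/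
/-!
Put `s = √(T/n*)` and `b_a = √(n* Δ_a² / (2 log T))`. Then `√(T Δ_a² / (2 log T)) = s b_a`, and
with `r = √ρ` one gets `f(n* ρ) = s⁻² ∑_a (r / (1 + r b_a))²`. When `r` drops from `1` to
`√(1 - ε)`, each summand drops by at least `ε / (1 + b_a)⁴`, because
`(1 + rb)² - r²(1 + b)² = (1 - r)(1 + r + 2rb) ≥ 1 - r²`. Summing over the `B`-near-optimal arms
and using `s⁻² = n*/T ≥ 1/K` gives the bound.
-/

open Real Finset

lemma sq_div_one_add_mul_gap {r b : ℝ} (hr0 : 0 ≤ r) (hr1 : r ≤ 1) (hb : 0 ≤ b) :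
    (1 - r ^ 2) / (1 + b) ^ 4 ≤ (1 / (1 + b)) ^ 2 - (r / (1 + r * b)) ^ 2 := by
  have hrb : 0 ≤ r * b := mul_nonneg hr0 hb
  have hdiff : (1 / (1 + b)) ^ 2 - (r / (1 + r * b)) ^ 2 =
      (1 - r) * (1 + r + 2 * r * b) / ((1 + b) ^ 2 * (1 + r * b) ^ 2) := by
    field_simp
    ring
  rw [hdiff, show (1 + b) ^ 4 = (1 + b) ^ 2 * (1 + b) ^ 2 by ring]
  apply div_le_div₀ (by nlinarith) (by nlinarith) (by positivity)
  gcongr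
  nlinarith

lemma sq_div_one_add_mul_gap_of_le {r b B : ℝ} (hr0 : 0 ≤ r) (hr1 : r ≤ 1) (hb : 0 ≤ b)
    (hbB : b ≤ B) :
    (1 - r ^ 2) / ((1 + 2 * B) ^ 2 * (1 + B) ^ 2) ≤
      (1 / (1 + b)) ^ 2 - (r / (1 + r * b)) ^ 2 := by
  refine le_trans ?_ (sq_div_one_add_mul_gap hr0 hr1 hb)
  apply div_le_div_of_nonneg_left (by nlinarith) (by positivity)
  rw [show (1 + b) ^ 4 = (1 + b) ^ 2 * (1 + b) ^ 2 by ring]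
  exact mul_le_mul (by gcongr; linarith) (by gcongr) (by positivity) (by positivity)

lemma inv_sqrt_div_mul_add_sqrt_mul_div_sq {T n ρ x c : ℝ} (hT : 0 ≤ T) (hn : 0 < n)
    (hρ : 0 < ρ) :
    (√(T / (n * ρ)) + √(T * x / c))⁻¹ ^ 2 =
      (T / n)⁻¹ * (√ρ / (1 + √ρ * √(n * x / c))) ^ 2 := by
  have hTn : 0 ≤ T / n := div_nonneg hT hn.le
  have hsqrtρ : √ρ ≠ 0 := (sqrt_pos.2 hρ).ne'
  rw [show T * x / c = T / n * (n * x / c) by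
      rw [mul_div_assoc, mul_div_assoc, ← mul_assoc, div_mul_cancel₀ T hn.ne'],
    ← div_div, sqrt_div' _ hρ.le, sqrt_mul hTn,
    show √(T / n) / √ρ + √(T / n) * √(n * x / c) =
      √(T / n) * ((1 + √ρ * √(n * x / c)) / √ρ) by field_simp,
    mul_inv, inv_div, mul_pow, inv_pow, sq_sqrt hTn]

lemma card_filter_mul_le_sum {ι : Type*} (s : Finset ι) (p : ι → Prop) [DecidablePred p]
    {g : ι → ℝ} {c : ℝ} (hg : ∀ i ∈ s, 0 ≤ g i) (hc : ∀ i ∈ s, p i → c ≤ g i) :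
    #(s.filter p) * c ≤ ∑ i ∈ s, g i :=
  calc (#(s.filter p) : ℝ) * c = #(s.filter p) • c := (nsmul_eq_mul _ _).symm
    _ ≤ ∑ i ∈ s.filter p, g i :=
      card_nsmul_le_sum _ _ _ fun i hi => hc i (mem_filter.1 hi).1 (mem_filter.1 hi).2
    _ ≤ ∑ i ∈ s, g i :=
      sum_le_sum_of_subset_of_nonneg (filter_subset _ _) fun i hi _ => hg i hi

theorem ucb_characteristic_upper_perturbation_general
    (T K : ℕ) (hK : 2 ≤ K) (hTK : K ≤ T)
    (Δ : ℕ → ℝ)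
    (f : ℝ → ℝ)
    (hf : ∀ y, f y = ∑ a ∈ Finset.range K,
      (Real.sqrt ((T : ℝ) / y) + Real.sqrt ((T : ℝ) * (Δ a) ^ 2 / (2 * Real.log T)))⁻¹ ^ 2)
    (nstar : ℝ) (hn_lb : (T : ℝ) / K ≤ nstar)
    (hnroot : f nstar = 1)
    (B : ℝ)
    (α : ℝ)
    (hSB : (α * K : ℝ) ≤
      ((Finset.range K).filter
        (fun a => Real.sqrt (nstar * (Δ a) ^ 2 / (2 * Real.log T)) ≤ B)).card)
    (ε : ℝ) (hε : 0 < ε) (hε1 : ε < 1) :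
    f (nstar * (1 - ε)) ≤ 1 - α * ε / ((1 + 2 * B) ^ 2 * (1 + B) ^ 2) := by
  have hK0 : (0 : ℝ) < K := by exact_mod_cast (by omega : 0 < K)
  have hT0 : (0 : ℝ) < T := by exact_mod_cast (by omega : 0 < T)
  have hn0 : 0 < nstar := (div_pos hT0 hK0).trans_le hn_lb
  set b : ℕ → ℝ := fun a => √(nstar * Δ a ^ 2 / (2 * log T))
  have hf_scaled : ∀ ρ, 0 < ρ →
      f (nstar * ρ) = (T / nstar)⁻¹ * ∑ a ∈ range K, (√ρ / (1 + √ρ * b a)) ^ 2 := by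
    intro ρ hρ
    rw [hf, mul_sum]
    exact sum_congr rfl fun a _ => inv_sqrt_div_mul_add_sqrt_mul_div_sq hT0.le hn0 hρ
  have hone := hf_scaled 1 one_pos
  simp only [mul_one, sqrt_one, one_mul, hnroot] at hone
  have hpert := hf_scaled (1 - ε) (by linarith)
  set r := √(1 - ε)
  have hr0 : 0 ≤ r := sqrt_nonneg _
  have hr1 : r ≤ 1 := sqrt_le_one.2 (by linarith)
  have hε_eq : ε = 1 - r ^ 2 := by rw [sq_sqrt (by linarith)]; ring
  set gap : ℕ → ℝ := fun a => (1 / (1 + b a)) ^ 2 - (r / (1 + r * b a)) ^ 2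
  have hgap_nonneg : ∀ a ∈ range K, 0 ≤ gap a := fun a _ =>
    (div_nonneg (by nlinarith) (by positivity)).trans
      (sq_div_one_add_mul_gap hr0 hr1 (sqrt_nonneg _))
  have hsum : α * K * (ε / ((1 + 2 * B) ^ 2 * (1 + B) ^ 2)) ≤ ∑ a ∈ range K, gap a :=
    (mul_le_mul_of_nonneg_right hSB (by positivity)).trans <|
      card_filter_mul_le_sum _ _ hgap_nonneg fun a _ hbB =>
        hε_eq ▸ sq_div_one_add_mul_gap_of_le hr0 hr1 (sqrt_nonneg _) hbB
  have hscale : (K : ℝ)⁻¹ ≤ (T / nstar)⁻¹ :=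
    inv_anti₀ (by positivity) ((div_le_iff₀' hn0).2 ((div_le_iff₀ hK0).1 hn_lb))
  have := calc α * ε / ((1 + 2 * B) ^ 2 * (1 + B) ^ 2)
      = (K : ℝ)⁻¹ * (α * K * (ε / ((1 + 2 * B) ^ 2 * (1 + B) ^ 2))) := by field_simp
    _ ≤ (K : ℝ)⁻¹ * ∑ a ∈ range K, gap a := mul_le_mul_of_nonneg_left hsum (by positivity)
    _ ≤ (T / nstar)⁻¹ * ∑ a ∈ range K, gap a :=
      mul_le_mul_of_nonneg_right hscale (sum_nonneg hgap_nonneg)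
  rw [sum_sub_distrib, mul_sub, ← hone, ← hpert] at this
  linarith

/-- If at least an `α`-fraction of the arms are `B`-near-optimal, then
`f(n*(1−ε)) ≤ 1 − αε/((1+2B)²(1+B)²)` for every `ε ∈ (0,1)`. -/
theorem ucb_characteristic_upper_perturbation
    (T K : ℕ) (hK : 2 ≤ K) (hTK : K ≤ T)
    (Δ : ℕ → ℝ) (hΔ : ∀ a, 0 ≤ Δ a) (hΔ1 : Δ 0 = 0)
    (f : ℝ → ℝ)
    (hf : ∀ y, f y = ∑ a ∈ Finset.range K,
      (Real.sqrt ((T : ℝ) / y) + Real.sqrt ((T : ℝ) * (Δ a) ^ 2 / (2 * Real.log T)))⁻¹ ^ 2)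
    (nstar : ℝ) (hn_lb : (T : ℝ) / K ≤ nstar) (hn_ub : nstar ≤ T)
    (hnroot : f nstar = 1)
    (B : ℝ) (hB : 0 < B)
    (α : ℝ) (hα : 0 < α) (hα1 : α ≤ 1)
    (hSB : (α * K : ℝ) ≤
      ((Finset.range K).filter
        (fun a => Real.sqrt (nstar * (Δ a) ^ 2 / (2 * Real.log T)) ≤ B)).card)
    (ε : ℝ) (hε : 0 < ε) (hε1 : ε < 1) :
    f (nstar * (1 - ε)) ≤ 1 - α * ε / ((1 + 2 * B) ^ 2 * (1 + B) ^ 2) :=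
  ucb_characteristic_upper_perturbation_general T K hK hTK Δ f hf nstar hn_lb hnroot B α hSB ε hε
    hε1
end

section
/- Fix K ≥ 2. Suppose for each arm a, on an event E_T, the sandwich bound c_T⁻ ≤ n_{a,T} · (1/√(n_{1,T}) + √(Δ_a²/(2 log T)))² ≤ c_T⁺ holds with deterministic c_T⁻, c_T⁺ → 1, where ∑_a n_{a,T} = T and n_{1,T} ≥ T/(2K). Then ∑_{a=1}^K (√(T/n_{1,T}) + √(T Δ_a²/(2 log T)))^{-2} → 1 on E_T as T → ∞. -/
open Real Finset Filter

/-- If each arm-pull count satisfies the multiplicative sandwich bound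
`c_T⁻ ≤ n_{a,T}(1/√n_{1,T} + √(Δ_a²/(2 log T)))² ≤ c_T⁺` with `c_T^± → 1`, the counts
sum to `T`, and `n_{1,T} ≥ T/(2K)`, then the characteristic sum at `n_{1,T}` tends to `1`. -/
theorem ucb_sandwich_implies_characteristic_sum
    (K : ℕ) (hK : 2 ≤ K)
    (n : ℕ → ℕ → ℝ)   -- `n a T` = number of pulls of arm `a` up to time `T`
    (Δ : ℕ → ℝ) (hΔ : ∀ a, 0 ≤ Δ a) (hΔ1 : Δ 0 = 0)
    (cminus cplus : ℕ → ℝ)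
    (hcminus : Tendsto cminus atTop (nhds 1))
    (hcplus : Tendsto cplus atTop (nhds 1))
    (hsum : ∀ T : ℕ, 2 ≤ T → ∑ a ∈ Finset.range K, n a T = T)
    (hn1 : ∀ T : ℕ, 2 ≤ T → (T : ℝ) / (2 * K) ≤ n 0 T)
    (hpos : ∀ a T, 0 < n a T)
    (hsandwich : ∀ T : ℕ, 2 ≤ T → ∀ a ∈ Finset.range K,
      cminus T ≤ n a T * (1 / Real.sqrt (n 0 T) + Real.sqrt ((Δ a) ^ 2 / (2 * Real.log T))) ^ 2 ∧
      n a T * (1 / Real.sqrt (n 0 T) + Real.sqrt ((Δ a) ^ 2 / (2 * Real.log T))) ^ 2 ≤ cplus T) :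
    Tendsto (fun T : ℕ => ∑ a ∈ Finset.range K,
        (Real.sqrt ((T : ℝ) / n 0 T) + Real.sqrt ((T : ℝ) * (Δ a) ^ 2 / (2 * Real.log T)))⁻¹ ^ 2)
      atTop (nhds 1) := by

  have hlo : Tendsto (fun T => (cplus T)⁻¹) atTop (nhds 1) := by
    simpa using hcplus.inv₀ one_ne_zero
  have hup : Tendsto (fun T => (cminus T)⁻¹) atTop (nhds 1) := by
    simpa using hcminus.inv₀ one_ne_zero
  have main : ∀ᶠ T : ℕ in atTop,
      (cplus T)⁻¹ ≤ (∑ a ∈ Finset.range K,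
        (Real.sqrt ((T : ℝ) / n 0 T) + Real.sqrt ((T : ℝ) * (Δ a) ^ 2 / (2 * Real.log T)))⁻¹ ^ 2) ∧
      (∑ a ∈ Finset.range K,
        (Real.sqrt ((T : ℝ) / n 0 T) + Real.sqrt ((T : ℝ) * (Δ a) ^ 2 / (2 * Real.log T)))⁻¹ ^ 2)
        ≤ (cminus T)⁻¹ := by
    have h1 : ∀ᶠ T in atTop, (1:ℝ)/2 ≤ cminus T :=
      hcminus.eventually (eventually_ge_nhds (by norm_num))
    have h2 : ∀ᶠ T in atTop, (1:ℝ)/2 ≤ cplus T :=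
      hcplus.eventually (eventually_ge_nhds (by norm_num))
    filter_upwards [h1, h2, eventually_ge_atTop 2] with T hcm hcp hT
    have hT0 : (0:ℝ) < T := by
      have : (2:ℝ) ≤ T := by exact_mod_cast hT
      linarith
    have hm : 0 < n 0 T := hpos 0 T
    have hsm : 0 < Real.sqrt (n 0 T) := Real.sqrt_pos.mpr hm
    -- rewrite each term
    have hrw : ∀ a, (Real.sqrt ((T : ℝ) / n 0 T)
          + Real.sqrt ((T : ℝ) * (Δ a) ^ 2 / (2 * Real.log T)))⁻¹ ^ 2
        = ((T : ℝ) * (1 / Real.sqrt (n 0 T)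
            + Real.sqrt ((Δ a) ^ 2 / (2 * Real.log T))) ^ 2)⁻¹ := by
      intro a
      have e1 : Real.sqrt ((T : ℝ) / n 0 T) = Real.sqrt T * (1 / Real.sqrt (n 0 T)) := by
        rw [Real.sqrt_div hT0.le]; ring
      have e2 : Real.sqrt ((T : ℝ) * (Δ a) ^ 2 / (2 * Real.log T))
          = Real.sqrt T * Real.sqrt ((Δ a) ^ 2 / (2 * Real.log T)) := by
        rw [mul_div_assoc, Real.sqrt_mul hT0.le]
      rw [e1, e2, ← mul_add, inv_pow, mul_pow, Real.sq_sqrt hT0.le]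
    have hbound : ∀ a ∈ Finset.range K,
        n a T / (cplus T * T) ≤ ((T : ℝ) * (1 / Real.sqrt (n 0 T)
            + Real.sqrt ((Δ a) ^ 2 / (2 * Real.log T))) ^ 2)⁻¹ ∧
        ((T : ℝ) * (1 / Real.sqrt (n 0 T)
            + Real.sqrt ((Δ a) ^ 2 / (2 * Real.log T))) ^ 2)⁻¹
          ≤ n a T / (cminus T * T) := by
      intro a ha
      obtain ⟨hsl, hsh⟩ := hsandwich T hT a ha
      set s := 1 / Real.sqrt (n 0 T) + Real.sqrt ((Δ a) ^ 2 / (2 * Real.log T)) with hs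
      have hspos : 0 < s :=
        hs ▸ add_pos_of_pos_of_nonneg (div_pos one_pos hsm) (Real.sqrt_nonneg _)
      have hna : 0 < n a T := hpos a T
      constructor
      · rw [inv_eq_one_div, div_le_div_iff₀ (by positivity) (by positivity)]
        nlinarith [mul_le_mul_of_nonneg_right hsh hT0.le]
      · rw [inv_eq_one_div, div_le_div_iff₀ (by positivity) (by positivity)]
        nlinarith [mul_le_mul_of_nonneg_right hsl hT0.le]
    have hcm0 : cminus T ≠ 0 := by linarith
    have hcp0 : cplus T ≠ 0 := by linarith
    constructor
    · calc (cplus T)⁻¹ = ∑ a ∈ Finset.range K, n a T / (cplus T * T) := by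
            rw [← Finset.sum_div, hsum T hT]; field_simp; try ring
        _ ≤ _ := by
            refine Finset.sum_le_sum fun a ha => ?_
            rw [hrw a]; exact (hbound a ha).1
    · calc _ ≤ ∑ a ∈ Finset.range K, n a T / (cminus T * T) := by
            refine Finset.sum_le_sum fun a ha => ?_
            rw [hrw a]; exact (hbound a ha).2
        _ = (cminus T)⁻¹ := by
            rw [← Finset.sum_div, hsum T hT]; field_simp; try ring
  exact tendsto_of_tendsto_of_tendsto_of_le_of_le' hlo hup
    (main.mono fun T h => h.1) (main.mono fun T h => h.2)
end

section
/- Suppose that on an event E_T: (i) for each arm a ≠ 1, √((2 log T)/(n_{a,T} − 1)) ≥ ρ_T · √((2 log T)/n_{1,T}) where ρ_T = (√(2 log T) − λ₁ g_T)/(√(2 log T) + λ_a g_T) → 1; and (ii) ∑_a n_{a,T} = T with K arms. If n_{1,T} ≤ T/(2K), then some arm a has n_{a,T} ≥ T/K + 1, and hence n_{1,T} ≥ ρ_T² (n_{a,T} − 1) ≥ (1 + o(1))·T/K, contradicting n_{1,T} ≤ T/(2K) for large T. Therefore n_{1,T} > T/(2K) for all sufficiently large T on E_T. -/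
open Real Finset Filter

/-- Pigeonhole-plus-comparison: if the UCB comparison inequality relates each suboptimal
arm's pull count to the optimal arm's with factor `ρ_{a,T} → 1`, and the pull counts
(each at least `1`) sum to `T`, then eventually `n_{1,T} > T/(2K)`. -/
theorem optimal_arm_pulled_often
    (K : ℕ) (hK : 2 ≤ K)
    (n : ℕ → ℕ → ℝ)   -- `n a T` = number of pulls of arm `a` up to time `T`
    (ρ : ℕ → ℕ → ℝ)   -- `ρ a T` = the comparison factor for arm `a` at time `T`
    (hρ : ∀ a, Tendsto (fun T => ρ a T) atTop (nhds 1))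
    (hρpos : ∀ a T, 0 < ρ a T)
    (hsum : ∀ T : ℕ, 2 ≤ T → ∑ a ∈ Finset.range K, n a T = T)
    (hge1 : ∀ T : ℕ, 2 ≤ T → ∀ a ∈ Finset.range K, 1 ≤ n a T)
    (hcomp : ∀ T : ℕ, 2 ≤ T → ∀ a ∈ Finset.range K, a ≠ 0 →
      Real.sqrt ((2 * Real.log T) / (n a T - 1))
        ≥ ρ a T * Real.sqrt ((2 * Real.log T) / (n 0 T))) :
    ∀ᶠ T : ℕ in atTop, n 0 T > (T : ℝ) / (2 * K) := by
  have hρ2 : ∀ᶠ T : ℕ in atTop, ∀ a ∈ Finset.range K, (0.9 : ℝ) ≤ ρ a T := by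
    rw [eventually_all_finset]
    intro a _
    exact (hρ a).eventually (eventually_ge_nhds (by norm_num))
  filter_upwards [hρ2, eventually_ge_atTop (3 * K + 1), eventually_ge_atTop 2]
    with T hρT hT3K hT2
  by_contra h
  push_neg at h
  have hK' : (2 : ℝ) ≤ K := by exact_mod_cast hK
  have hKpos : (0 : ℝ) < 2 * K := by linarith
  have hT3K' : (3 : ℝ) * K + 1 ≤ T := by exact_mod_cast hT3K
  have h' : n 0 T * (2 * K) ≤ T := by
    rwa [le_div_iff₀ hKpos] at h
  have h0mem : 0 ∈ Finset.range K := by simp; omega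
  have hn0 : 1 ≤ n 0 T := hge1 T hT2 0 h0mem
  have hlog : 0 < Real.log T := Real.log_pos (by exact_mod_cast by omega)
  have hL : 0 < 2 * Real.log T := by linarith
  set s := (Finset.range K).erase 0 with hs
  have hcard : s.card = K - 1 := by
    rw [hs, Finset.card_erase_of_mem h0mem, Finset.card_range]
  have hsum' : ∑ a ∈ s, n a T = (T : ℝ) - n 0 T := by
    have h2 := hsum T hT2
    rw [← Finset.add_sum_erase _ _ h0mem] at h2
    linarith
  have hKm1 : (0 : ℝ) < (K : ℝ) - 1 := by linarith
  have hone : 1 ∈ s := by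
    rw [hs]
    simp only [Finset.mem_erase, Finset.mem_range]
    omega
  -- pigeonhole
  have havg : ∃ a ∈ s, ((T : ℝ) - n 0 T) / ((K : ℝ) - 1) ≤ n a T := by
    by_contra hc
    push_neg at hc
    have hlt : ∑ a ∈ s, n a T < ∑ a ∈ s, ((T : ℝ) - n 0 T) / ((K : ℝ) - 1) :=
      Finset.sum_lt_sum_of_nonempty ⟨1, hone⟩ hc
    rw [hsum', Finset.sum_const, hcard, nsmul_eq_mul] at hlt
    have hcast : ((K - 1 : ℕ) : ℝ) = (K : ℝ) - 1 := by
      have : 1 ≤ K := by omega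
      push_cast [this]
      ring
    rw [hcast, mul_div_cancel₀ _ (ne_of_gt hKm1)] at hlt
    exact lt_irrefl _ hlt
  obtain ⟨a, has, ha⟩ := havg
  have hamem : a ∈ Finset.range K := Finset.mem_of_mem_erase has
  have hane : a ≠ 0 := Finset.ne_of_mem_erase has
  have h1 : (T : ℝ) - n 0 T ≤ ((K : ℝ) - 1) * n a T := by
    rwa [div_le_iff₀ hKm1, mul_comm] at ha
  -- n a T > 1
  have hna1 : (0 : ℝ) < n a T - 1 := by nlinarith
  have hn0pos : (0 : ℝ) < n 0 T := by linarith
  -- squaring the comparison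
  have hcmp := hcomp T hT2 a hamem hane
  have hsq : ρ a T ^ 2 * ((2 * Real.log T) / n 0 T)
      ≤ (2 * Real.log T) / (n a T - 1) := by
    have hnn : 0 ≤ ρ a T * Real.sqrt ((2 * Real.log T) / (n 0 T)) :=
      mul_nonneg (hρpos a T).le (Real.sqrt_nonneg _)
    have := mul_self_le_mul_self hnn hcmp
    calc ρ a T ^ 2 * ((2 * Real.log T) / n 0 T)
        = (ρ a T * Real.sqrt ((2 * Real.log T) / (n 0 T)))
          * (ρ a T * Real.sqrt ((2 * Real.log T) / (n 0 T))) := by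
          rw [mul_mul_mul_comm, Real.mul_self_sqrt (by positivity)]; ring
      _ ≤ Real.sqrt ((2 * Real.log T) / (n a T - 1))
          * Real.sqrt ((2 * Real.log T) / (n a T - 1)) := this
      _ = (2 * Real.log T) / (n a T - 1) := Real.mul_self_sqrt (by positivity)
  have hkey : ρ a T ^ 2 * (n a T - 1) ≤ n 0 T := by
    rw [mul_div_assoc'] at hsq
    rw [div_le_div_iff₀ hn0pos hna1] at hsq
    have h3 : (2 * Real.log T) * (ρ a T ^ 2 * (n a T - 1))
        ≤ (2 * Real.log T) * n 0 T := by nlinarith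
    exact le_of_mul_le_mul_left h3 hL
  have hρa : (0.9 : ℝ) ≤ ρ a T := hρT a hamem
  have hρsq : (0.81 : ℝ) ≤ ρ a T ^ 2 := by nlinarith
  nlinarith [mul_le_mul_of_nonneg_right hρsq (le_of_lt hna1),
    mul_le_mul_of_nonneg_left h1 (by norm_num : (0:ℝ) ≤ 0.81),
    mul_pos hKm1 hn0pos]
end

section
/- For t ≥ 1 and δ ∈ (0,1), choosing i = ⌈log₂ t⌉ in the family of bounds min_i (√(t/2^i) + √(2^i/t)) · √(log(i(i+1)/δ)/(2t)) yields min_i (√(t/2^i) + √(2^i/t)) · √(log(i(i+1)/δ)/(2t)) ≤ √((9/(4t)) · log((log₂(4t))²/δ)). -/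
/-!
If `2 ^ i` lies in `[t, 2t]`, then `r = 2 ^ i / t ∈ [1, 2]`, so
`(√(t / 2 ^ i) + √(2 ^ i / t))² = r + 1/r + 2 ≤ 9/2`, and `2 ^ (i + 1) ≤ 4t` gives
`i (i + 1) ≤ (i + 1)² ≤ (log₂ 4t)²`. Both `i = ⌈log₂ t⌉` and `i = ⌊log₂ t⌋ + 1` qualify.
-/

open Real

/-- The term `bᵢ(t)`: `log (i (i + 1) / δ) = log (1 / (δ γᵢ))` for `γᵢ = 1 / (i (i + 1))`. -/
noncomputable def stitchedTerm (t δ : ℝ) (i : ℕ) : ℝ :=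
  (√(t / 2 ^ i) + √(2 ^ i / t)) * √(log (i * (i + 1) / δ) / (2 * t))

lemma stitchedTerm_nonneg (t δ : ℝ) (i : ℕ) : 0 ≤ stitchedTerm t δ i := by
  unfold stitchedTerm
  positivity

lemma sqrt_div_add_sqrt_div_le {t s : ℝ} (ht : 0 < t) (hts : t ≤ s) (hst : s ≤ 2 * t) :
    √(t / s) + √(s / t) ≤ √(9 / 2) := by
  have hs : 0 < s := ht.trans_le hts
  have hprod : √(t / s) * √(s / t) = 1 := by
    rw [← sqrt_mul (by positivity), div_mul_div_comm, mul_comm t s, div_self (by positivity),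
      sqrt_one]
  have hsum : t / s + s / t ≤ 5 / 2 := by
    rw [div_add_div _ _ hs.ne' ht.ne', div_le_iff₀ (by positivity)]
    nlinarith [mul_nonneg (sub_nonneg.2 hts) (sub_nonneg.2 hst)]
  rw [le_sqrt (by positivity) (by norm_num), add_sq, mul_assoc, hprod,
    sq_sqrt (by positivity), sq_sqrt (by positivity)]
  linarith

lemma mul_add_one_le_logb_sq {t : ℝ} {i : ℕ} (ht : 0 < t) (hi : (2 : ℝ) ^ i ≤ 2 * t) :
    (i : ℝ) * (i + 1) ≤ logb 2 (4 * t) ^ 2 := by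
  have hlog : (i : ℝ) + 1 ≤ logb 2 (4 * t) := by
    rw [le_logb_iff_rpow_le one_lt_two (by positivity), ← Nat.cast_add_one, rpow_natCast,
      pow_succ]
    linarith
  nlinarith [i.cast_nonneg (α := ℝ)]

lemma stitchedTerm_le {t δ : ℝ} {i : ℕ} (ht : 0 < t) (hδ : 0 < δ)
    (hti : t ≤ 2 ^ i) (hit : (2 : ℝ) ^ i ≤ 2 * t) :
    stitchedTerm t δ i ≤ √(9 / (4 * t) * log (logb 2 (4 * t) ^ 2 / δ)) := by
  rcases i.eq_zero_or_pos with rfl | hi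
  · simp [stitchedTerm]
  have hlog : log (i * (i + 1) / δ) ≤ log (logb 2 (4 * t) ^ 2 / δ) :=
    log_le_log (by positivity) (by gcongr; exact mul_add_one_le_logb_sq ht hit)
  calc stitchedTerm t δ i
      ≤ √(9 / 2) * √(log (logb 2 (4 * t) ^ 2 / δ) / (2 * t)) := by
        unfold stitchedTerm
        gcongr
        exact sqrt_div_add_sqrt_div_le ht hti hit
    _ = √(9 / (4 * t) * log (logb 2 (4 * t) ^ 2 / δ)) := by
        rw [← sqrt_mul (by norm_num)]
        ring_nf

lemma two_pow_log_two_succ_le {t : ℕ} (ht : t ≠ 0) : 2 ^ (Nat.log 2 t + 1) ≤ 2 * t := by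
  rw [pow_succ, mul_comm]
  exact Nat.mul_le_mul_left 2 (Nat.pow_log_le_self 2 ht)

lemma two_pow_clog_two_le {t : ℕ} (ht : t ≠ 0) : 2 ^ Nat.clog 2 t ≤ 2 * t :=
  (Nat.pow_le_pow_right two_pos
    (Nat.clog_le_of_le_pow (Nat.lt_pow_succ_log_self one_lt_two t).le)).trans
    (two_pow_log_two_succ_le ht)

theorem stitched_bound_optimization_general
    (t : ℕ) (ht : 1 ≤ t) (δ : ℝ) (hδ0 : 0 < δ)
    (b : ℕ → ℝ)
    (hb : ∀ i : ℕ, b i =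
      (Real.sqrt ((t : ℝ) / 2 ^ i) + Real.sqrt ((2 : ℝ) ^ i / t)) *
        Real.sqrt (Real.log ((i : ℝ) * (i + 1) / δ) / (2 * t))) :
    b (Nat.clog 2 t) ≤ Real.sqrt ((9 / (4 * t)) * Real.log ((Real.logb 2 (4 * t)) ^ 2 / δ)) ∧
    (⨅ i : ℕ, b (i + 1)) ≤
      Real.sqrt ((9 / (4 * t)) * Real.log ((Real.logb 2 (4 * t)) ^ 2 / δ)) := by
  obtain rfl : b = stitchedTerm t δ := funext hb
  have ht0 : (0 : ℝ) < t := by exact_mod_cast ht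
  have hceil : stitchedTerm t δ (Nat.clog 2 t) ≤ _ :=
    stitchedTerm_le ht0 hδ0 (by exact_mod_cast Nat.le_pow_clog one_lt_two t)
      (by exact_mod_cast two_pow_clog_two_le (by omega))
  have hfloor : stitchedTerm t δ (Nat.log 2 t + 1) ≤ _ :=
    stitchedTerm_le ht0 hδ0 (by exact_mod_cast (Nat.lt_pow_succ_log_self one_lt_two t).le)
      (by exact_mod_cast two_pow_log_two_succ_le (by omega))
  have hbdd : BddBelow (Set.range fun i ↦ stitchedTerm t δ (i + 1)) :=
    ⟨0, by rintro _ ⟨i, rfl⟩; exact stitchedTerm_nonneg t δ (i + 1)⟩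
  exact ⟨hceil, (ciInf_le hbdd (Nat.log 2 t)).trans hfloor⟩

/-- Optimization step of the stitched LIL bound: choosing `i = ⌈log₂ t⌉` in the family
`b_i(t) = (√(t/2^i) + √(2^i/t))·√(log(i(i+1)/δ)/(2t))` shows
`min_i b_i(t) ≤ √((9/(4t)) log((log₂ 4t)²/δ))`. -/
theorem stitched_bound_optimization
    (t : ℕ) (ht : 1 ≤ t) (δ : ℝ) (hδ0 : 0 < δ) (hδ1 : δ < 1)
    (b : ℕ → ℝ)
    (hb : ∀ i : ℕ, b i =
      (Real.sqrt ((t : ℝ) / 2 ^ i) + Real.sqrt ((2 : ℝ) ^ i / t)) *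
        Real.sqrt (Real.log ((i : ℝ) * (i + 1) / δ) / (2 * t))) :
    b (Nat.clog 2 t) ≤ Real.sqrt ((9 / (4 * t)) * Real.log ((Real.logb 2 (4 * t)) ^ 2 / δ)) ∧
    (⨅ i : ℕ, b (i + 1)) ≤
      Real.sqrt ((9 / (4 * t)) * Real.log ((Real.logb 2 (4 * t)) ^ 2 / δ)) :=
  stitched_bound_optimization_general t ht δ hδ0 b hb
end
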